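/- Let α = (a, s) be a circle with the origin strictly inside (dist 0 a < s; type I) and β = (b, t) a circle with the origin strictly outside (dist 0 b > t; type II). For v ≠ 0 let C(v) denote the circle with center (v, v) and radius |v|. Suppose there are reals t₁ ≠ t₂ > 0 and u₁ ≠ u₂ > 0 such that the set of all circles that are tangent to both coordinate axes and tangent to both α and β is exactly {C(t₁), C(t₂), C(−u₁), C(−u₂)} (two solutions in the first quadrant, two in the third, none in the others). Then {t₁, t₂} = {u₁, u₂}; i.e., the set of these four solutions is invariant under the point reflection in the origin. -/

import Mathlib

noncomputable section

/-- The Euclidean plane. -/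
abbrev Plane := EuclideanSpace ℝ (Fin 2)

/-- Two circles (center, radius) are tangent: they are distinct and the distance between
centers equals the sum (external) or the absolute difference (internal) of the radii. -/
def Tangent (A B : Plane × ℝ) : Prop :=
  A ≠ B ∧ (dist A.1 B.1 = A.2 + B.2 ∨ dist A.1 B.1 = |A.2 - B.2|)

/-- The point of the plane with the given coordinates. -/
def pt (x y : ℝ) : Plane := WithLp.toLp 2 ![x, y]

lemma two_roots_add {p c x y : ℝ} (hx : x^2 + p*x + c = 0) (hy : y^2 + p*y + c = 0)
    (hxy : x ≠ y) : x + y = -p := by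
  have h : (x - y) * (x + y + p) = 0 := by linear_combination hx - hy
  rcases mul_eq_zero.mp h with h | h
  · exact absurd (sub_eq_zero.mp h) hxy
  · linarith

lemma two_roots_mul {p c x y : ℝ} (hx : x^2 + p*x + c = 0) (hy : y^2 + p*y + c = 0)
    (hxy : x ≠ y) : x * y = c := by
  have h := two_roots_add hx hy hxy
  linear_combination x * h - hx

lemma no_three_roots {p c x y z : ℝ} (hx : x^2 + p*x + c = 0) (hy : y^2 + p*y + c = 0)
    (hz : z^2 + p*z + c = 0) (hxy : x ≠ y) (hxz : x ≠ z) (hyz : y ≠ z) : False := by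
  have h1 := two_roots_add hx hy hxy
  have h2 := two_roots_add hx hz hxz
  exact hyz (by linarith)

lemma dist_sq (x y : Plane) : dist x y ^ 2 = (x 0 - y 0)^2 + (x 1 - y 1)^2 := by
  rw [EuclideanSpace.dist_eq, Real.sq_sqrt (by positivity)]
  simp [Fin.sum_univ_two, Real.dist_eq, sq_abs]

/-- Tangency of the circle with center `(v,v)` and radius `|v|` to a circle `(c, σ)`
forces `v` to be a root of one of two explicit quadratics. -/
lemma tangent_quad {v ρ σ : ℝ} (hρ : ρ = |v|) (c : Plane)
    (h : dist (pt v v) c = ρ + σ ∨ dist (pt v v) c = |ρ - σ|) :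
    v^2 + (-2*(c 0 + c 1 + σ))*v + (c 0^2 + c 1^2 - σ^2) = 0 ∨
    v^2 + (-2*(c 0 + c 1 - σ))*v + (c 0^2 + c 1^2 - σ^2) = 0 := by
  have hd : dist (pt v v) c ^ 2 = (v - c 0)^2 + (v - c 1)^2 := by
    rw [dist_sq]; simp [pt]
  have hw : ρ^2 = v^2 := by rw [hρ, sq_abs]
  have hK : v^2 - 2*(c 0 + c 1)*v + (c 0^2 + c 1^2 - σ^2) = 2*ρ*σ ∨
      v^2 - 2*(c 0 + c 1)*v + (c 0^2 + c 1^2 - σ^2) = -(2*ρ*σ) := by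
    rcases h with h | h
    · left
      have h2 : (v - c 0)^2 + (v - c 1)^2 = (ρ + σ)^2 := by rw [← hd, h]
      linear_combination h2 + hw
    · right
      have h2 : (v - c 0)^2 + (v - c 1)^2 = (ρ - σ)^2 := by rw [← hd, h, sq_abs]
      linear_combination h2 + hw
  have hprod : (v^2 + (-2*(c 0 + c 1 + σ))*v + (c 0^2 + c 1^2 - σ^2)) *
      (v^2 + (-2*(c 0 + c 1 - σ))*v + (c 0^2 + c 1^2 - σ^2)) = 0 := by
    rcases hK with hK | hK
    · linear_combination
        (v^2 - 2*(c 0 + c 1)*v + (c 0^2 + c 1^2 - σ^2) + 2*ρ*σ) * hK + 4*σ^2 * hw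
    · linear_combination
        (v^2 - 2*(c 0 + c 1)*v + (c 0^2 + c 1^2 - σ^2) - 2*ρ*σ) * hK + 4*σ^2 * hw
  exact mul_eq_zero.mp hprod

lemma beta_pair {p q c r₁ r₂ r₃ : ℝ} (hc : 0 < c) (h12 : r₁ ≠ r₂)
    (h13 : r₁ * r₃ < 0) (h23 : r₂ * r₃ < 0)
    (h1 : r₁^2 + p*r₁ + c = 0 ∨ r₁^2 + q*r₁ + c = 0)
    (h2 : r₂^2 + p*r₂ + c = 0 ∨ r₂^2 + q*r₂ + c = 0)
    (h3 : r₃^2 + p*r₃ + c = 0 ∨ r₃^2 + q*r₃ + c = 0) :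
    r₁ * r₂ = c := by
  have h13' : r₁ ≠ r₃ := by rintro rfl; nlinarith [sq_nonneg r₁]
  have h23' : r₂ ≠ r₃ := by rintro rfl; nlinarith [sq_nonneg r₂]
  rcases h1 with h1 | h1 <;> rcases h2 with h2 | h2 <;>
    first
      | exact two_roots_mul h1 h2 h12
      | (rcases h3 with h3 | h3 <;>
          first
            | (exfalso; nlinarith [two_roots_mul h1 h3 h13'])
            | (exfalso; nlinarith [two_roots_mul h2 h3 h23']))

lemma alpha_pair {p q c x₁ x₂ y₁ y₂ : ℝ} (hc : c < 0)
    (hx₁ : 0 < x₁) (hx₂ : 0 < x₂) (hy₁ : 0 < y₁) (hy₂ : 0 < y₂)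
    (hxne : x₁ ≠ x₂) (hyne : y₁ ≠ y₂)
    (h1 : x₁^2 + p*x₁ + c = 0 ∨ x₁^2 + q*x₁ + c = 0)
    (h2 : x₂^2 + p*x₂ + c = 0 ∨ x₂^2 + q*x₂ + c = 0)
    (h3 : (-y₁)^2 + p*(-y₁) + c = 0 ∨ (-y₁)^2 + q*(-y₁) + c = 0)
    (h4 : (-y₂)^2 + p*(-y₂) + c = 0 ∨ (-y₂)^2 + q*(-y₂) + c = 0) :
    (x₁*y₁ = -c ∧ x₂*y₂ = -c) ∨ (x₁*y₂ = -c ∧ x₂*y₁ = -c) := by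
  have hy12 : (-y₁ : ℝ) ≠ -y₂ := by simpa using hyne
  have hx1y1 : x₁ ≠ -y₁ := by intro h; linarith
  have hx1y2 : x₁ ≠ -y₂ := by intro h; linarith
  have hx2y1 : x₂ ≠ -y₁ := by intro h; linarith
  have hx2y2 : x₂ ≠ -y₂ := by intro h; linarith
  rcases h1 with h1 | h1 <;> rcases h2 with h2 | h2
  · exact absurd (two_roots_mul h1 h2 hxne) (by intro h; nlinarith [mul_pos hx₁ hx₂])
  · -- x₁ root of p-quadratic, x₂ of q-quadratic
    rcases h3 with h3 | h3
    · rcases h4 with h4 | h4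
      · exact (no_three_roots h1 h3 h4 hx1y1 hx1y2 hy12).elim
      · exact Or.inl ⟨by linear_combination -(two_roots_mul h1 h3 hx1y1),
          by linear_combination -(two_roots_mul h2 h4 hx2y2)⟩
    · rcases h4 with h4 | h4
      · exact Or.inr ⟨by linear_combination -(two_roots_mul h1 h4 hx1y2),
          by linear_combination -(two_roots_mul h2 h3 hx2y1)⟩
      · exact (no_three_roots h2 h3 h4 hx2y1 hx2y2 hy12).elim
  · -- x₁ root of q-quadratic, x₂ of p-quadratic
    rcases h3 with h3 | h3
    · rcases h4 with h4 | h4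
      · exact (no_three_roots h2 h3 h4 hx2y1 hx2y2 hy12).elim
      · exact Or.inr ⟨by linear_combination -(two_roots_mul h1 h4 hx1y2),
          by linear_combination -(two_roots_mul h2 h3 hx2y1)⟩
    · rcases h4 with h4 | h4
      · exact Or.inl ⟨by linear_combination -(two_roots_mul h1 h3 hx1y1),
          by linear_combination -(two_roots_mul h2 h4 hx2y2)⟩
      · exact (no_three_roots h1 h3 h4 hx1y1 hx1y2 hy12).elim
  · exact absurd (two_roots_mul h1 h2 hxne) (by intro h; nlinarith [mul_pos hx₁ hx₂])

/-- Lemma 16: if the common tangent circles (to both axes, a type-I circle α and a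
type-II circle β) are exactly two in the first quadrant and two in the third, then this
set of four solutions is symmetric about the origin. -/
theorem solutions_symmetric_about_origin
    (a b : Plane) (s t : ℝ) (hs : 0 < s) (ht : 0 < t)
    (hα : dist (0 : Plane) a < s) (hβ : t < dist (0 : Plane) b)
    (t₁ t₂ u₁ u₂ : ℝ) (ht₁ : 0 < t₁) (ht₂ : 0 < t₂) (hu₁ : 0 < u₁) (hu₂ : 0 < u₂)
    (htne : t₁ ≠ t₂) (hune : u₁ ≠ u₂)
    (hset : {d : Plane × ℝ | 0 < d.2 ∧ |d.1 0| = d.2 ∧ |d.1 1| = d.2 ∧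
        Tangent d (a, s) ∧ Tangent d (b, t)} =
      {(pt t₁ t₁, t₁), (pt t₂ t₂, t₂), (pt (-u₁) (-u₁), u₁), (pt (-u₂) (-u₂), u₂)}) :
    ({t₁, t₂} : Set ℝ) = {u₁, u₂} := by
  have key := Set.ext_iff.mp hset
  -- the four elements belong to the solution set
  have m1 : 0 < t₁ ∧ |pt t₁ t₁ 0| = t₁ ∧ |pt t₁ t₁ 1| = t₁ ∧
      Tangent (pt t₁ t₁, t₁) (a, s) ∧ Tangent (pt t₁ t₁, t₁) (b, t) :=
    (key (pt t₁ t₁, t₁)).mpr (by simp)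
  have m2 : 0 < t₂ ∧ |pt t₂ t₂ 0| = t₂ ∧ |pt t₂ t₂ 1| = t₂ ∧
      Tangent (pt t₂ t₂, t₂) (a, s) ∧ Tangent (pt t₂ t₂, t₂) (b, t) :=
    (key (pt t₂ t₂, t₂)).mpr (by simp)
  have m3 : 0 < u₁ ∧ |pt (-u₁) (-u₁) 0| = u₁ ∧ |pt (-u₁) (-u₁) 1| = u₁ ∧
      Tangent (pt (-u₁) (-u₁), u₁) (a, s) ∧ Tangent (pt (-u₁) (-u₁), u₁) (b, t) :=
    (key (pt (-u₁) (-u₁), u₁)).mpr (by simp)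
  have m4 : 0 < u₂ ∧ |pt (-u₂) (-u₂) 0| = u₂ ∧ |pt (-u₂) (-u₂) 1| = u₂ ∧
      Tangent (pt (-u₂) (-u₂), u₂) (a, s) ∧ Tangent (pt (-u₂) (-u₂), u₂) (b, t) :=
    (key (pt (-u₂) (-u₂), u₂)).mpr (by simp)
  obtain ⟨-, -, -, ⟨-, hT1a⟩, ⟨-, hT1b⟩⟩ := m1
  obtain ⟨-, -, -, ⟨-, hT2a⟩, ⟨-, hT2b⟩⟩ := m2
  obtain ⟨-, -, -, ⟨-, hT3a⟩, ⟨-, hT3b⟩⟩ := m3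
  obtain ⟨-, -, -, ⟨-, hT4a⟩, ⟨-, hT4b⟩⟩ := m4
  have hρ1 : t₁ = |t₁| := (abs_of_pos ht₁).symm
  have hρ2 : t₂ = |t₂| := (abs_of_pos ht₂).symm
  have hρ3 : u₁ = |(-u₁)| := by rw [abs_neg, abs_of_pos hu₁]
  have hρ4 : u₂ = |(-u₂)| := by rw [abs_neg, abs_of_pos hu₂]
  have Hα1 := tangent_quad hρ1 a hT1a
  have Hα2 := tangent_quad hρ2 a hT2a
  have Hα3 := tangent_quad hρ3 a hT3a
  have Hα4 := tangent_quad hρ4 a hT4a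
  have Hβ1 := tangent_quad hρ1 b hT1b
  have Hβ2 := tangent_quad hρ2 b hT2b
  have Hβ3 := tangent_quad hρ3 b hT3b
  have Hβ4 := tangent_quad hρ4 b hT4b
  -- the origin is inside α and outside β
  have hda : dist (0 : Plane) a ^ 2 = a 0 ^ 2 + a 1 ^ 2 := by
    rw [dist_sq]
    have h0 : ∀ i, (0 : Plane) i = 0 := fun i => rfl
    rw [h0 0, h0 1]; ring
  have hdb : dist (0 : Plane) b ^ 2 = b 0 ^ 2 + b 1 ^ 2 := by
    rw [dist_sq]
    have h0 : ∀ i, (0 : Plane) i = 0 := fun i => rfl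
    rw [h0 0, h0 1]; ring
  have hA : a 0 ^ 2 + a 1 ^ 2 - s ^ 2 < 0 := by
    nlinarith [dist_nonneg (x := (0 : Plane)) (y := a)]
  have hB : (0 : ℝ) < b 0 ^ 2 + b 1 ^ 2 - t ^ 2 := by
    nlinarith [dist_nonneg (x := (0 : Plane)) (y := b)]
  -- β side: products of the positive pair and the negative pair
  have hbt : t₁ * t₂ = b 0 ^ 2 + b 1 ^ 2 - t ^ 2 :=
    beta_pair hB htne (by nlinarith) (by nlinarith) Hβ1 Hβ2 Hβ3
  have hbu : (-u₁) * (-u₂) = b 0 ^ 2 + b 1 ^ 2 - t ^ 2 :=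
    beta_pair hB (by simpa using hune) (by nlinarith) (by nlinarith) Hβ3 Hβ4 Hβ1
  have htu : t₁ * t₂ = u₁ * u₂ := by linarith [hbt, hbu, neg_mul_neg u₁ u₂]
  -- α side: cross products
  have halpha := alpha_pair hA ht₁ ht₂ hu₁ hu₂ htne hune Hα1 Hα2 Hα3 Hα4
  rcases halpha with ⟨e1, e2⟩ | ⟨e1, e2⟩
  · -- t₁u₁ = t₂u₂ = -A  ⇒  t₁ = u₂, t₂ = u₁
    have h5 : (t₁ - u₂) * (t₁ + u₂) * u₁ = 0 := by
      linear_combination t₁ * e1 - t₁ * e2 + u₂ * htu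
    have ht1u2 : t₁ = u₂ := by
      rcases mul_eq_zero.mp h5 with h | h
      · rcases mul_eq_zero.mp h with h | h
        · exact sub_eq_zero.mp h
        · linarith
      · linarith
    rw [ht1u2] at htu
    have ht2u1 : t₂ = u₁ :=
      mul_left_cancel₀ (ne_of_gt hu₂) (by linarith [htu])
    rw [ht1u2, ht2u1]
    exact Set.pair_comm u₂ u₁
  · -- t₁u₂ = t₂u₁ = -A  ⇒  t₁ = u₁, t₂ = u₂
    have h5 : (t₁ - u₁) * (t₁ + u₁) * u₂ = 0 := by
      linear_combination t₁ * e1 - t₁ * e2 + u₁ * htu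
    have ht1u1 : t₁ = u₁ := by
      rcases mul_eq_zero.mp h5 with h | h
      · rcases mul_eq_zero.mp h with h | h
        · exact sub_eq_zero.mp h
        · linarith
      · linarith
    rw [ht1u1] at htu
    have ht2u2 : t₂ = u₂ :=
      mul_left_cancel₀ (ne_of_gt hu₁) (by linarith [htu])
    rw [ht1u1, ht2u2]
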